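/- Let A be a finite subgroup of G such that every element of A has a unique expression as z y x with z ∈ A ∩ U, y ∈ A ∩ M, x ∈ A ∩ Ū. Let π be a representation of A on a complex vector space V and let v ∈ V be a vector fixed by every element of A ∩ M and by every element of A ∩ Ū. Then Σ_{z ∈ A∩U} π(z)v = (1/(|A ∩ M|·|A ∩ Ū|)) Σ_{a ∈ A} π(a)v; in particular, the vector Σ_{z ∈ A∩U} π(z)v is fixed by every element of A. -/
import Mathlib


/-- Let `A` be a finite subgroup of `G` in which every element has a unique
expression `z * y * x` with `z ∈ A ∩ U`, `y ∈ A ∩ M`, `x ∈ A ∩ Ū`.  If `π` is a complex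
representation of `A` and `v` is fixed by `A ∩ M` and `A ∩ Ū`, then
`∑_{z ∈ A ∩ U} π(z) v = (1 / (|A ∩ M| ⬝ |A ∩ Ū|)) ∑_{a ∈ A} π(a) v`; in particular the
vector `∑_{z ∈ A ∩ U} π(z) v` is fixed by every element of `A`. -/
theorem sum_over_unipotent_part_eq_average {G : Type*} [Group G]
    (Ubar M U : Subgroup G) (A : Subgroup G) [Finite ↥A]
    (huniq : ∀ a : ↥A,
      ∃! t : ↥(U.subgroupOf A) × ↥(M.subgroupOf A) × ↥(Ubar.subgroupOf A),
        a = (↑t.1 : ↥A) * (↑t.2.1 : ↥A) * (↑t.2.2 : ↥A))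
    {V : Type*} [AddCommGroup V] [Module ℂ V]
    (π : Representation ℂ ↥A V) (v : V)
    (hM : ∀ y : ↥(M.subgroupOf A), π ↑y v = v)
    (hUbar : ∀ x : ↥(Ubar.subgroupOf A), π ↑x v = v) :
    (∑ᶠ z : ↥(U.subgroupOf A), π ↑z v)
        = ((Nat.card ↥(M.subgroupOf A) : ℂ) * (Nat.card ↥(Ubar.subgroupOf A) : ℂ))⁻¹ •
            ∑ᶠ a : ↥A, π a v
      ∧ ∀ a : ↥A,
          π a (∑ᶠ z : ↥(U.subgroupOf A), π ↑z v) = ∑ᶠ z : ↥(U.subgroupOf A), π ↑z v := by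
  classical
  have : Fintype ↥A := Fintype.ofFinite _
  have : Fintype ↥(U.subgroupOf A) := Fintype.ofFinite _
  have : Fintype ↥(M.subgroupOf A) := Fintype.ofFinite _
  have : Fintype ↥(Ubar.subgroupOf A) := Fintype.ofFinite _
  set f : ↥(U.subgroupOf A) × ↥(M.subgroupOf A) × ↥(Ubar.subgroupOf A) → ↥A :=
    fun t => (↑t.1 : ↥A) * (↑t.2.1 : ↥A) * (↑t.2.2 : ↥A) with hf
  have hbij : Function.Bijective f := by
    constructor
    · intro s t hst
      obtain ⟨w, -, hw⟩ := huniq (f s)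
      have hs := hw s rfl
      have ht := hw t hst
      rw [hs, ht]
    · intro a
      obtain ⟨t, ht, -⟩ := huniq a
      exact ⟨t, ht.symm⟩
  set e := Equiv.ofBijective f hbij with he
  -- rewrite the finsums as finite sums
  rw [finsum_eq_sum_of_fintype, finsum_eq_sum_of_fintype]
  -- the key identity
  have key : (∑ a : ↥A, π a v)
      = ((Nat.card ↥(M.subgroupOf A)) * (Nat.card ↥(Ubar.subgroupOf A))) •
          ∑ z : ↥(U.subgroupOf A), π ↑z v := by
    rw [← Equiv.sum_comp e (fun a => π a v)]
    have : ∀ t : ↥(U.subgroupOf A) × ↥(M.subgroupOf A) × ↥(Ubar.subgroupOf A),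
        π (e t) v = π ↑t.1 v := by
      intro t
      show π (f t) v = _
      simp only [hf, map_mul]
      simp [Module.End.mul_apply, hUbar, hM]
    rw [Fintype.sum_congr _ _ this, Fintype.sum_prod_type]
    simp only [Finset.sum_const, Finset.card_univ]
    rw [← Finset.sum_nsmul]
    simp [Nat.card_eq_fintype_card]
  have hc : ((Nat.card ↥(M.subgroupOf A) : ℂ) * (Nat.card ↥(Ubar.subgroupOf A) : ℂ)) ≠ 0 := by
    have h1 : (Nat.card ↥(M.subgroupOf A)) ≠ 0 := Nat.card_pos.ne'
    have h2 : (Nat.card ↥(Ubar.subgroupOf A)) ≠ 0 := Nat.card_pos.ne'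
    exact mul_ne_zero (Nat.cast_ne_zero.mpr h1) (Nat.cast_ne_zero.mpr h2)
  have main : (∑ z : ↥(U.subgroupOf A), π ↑z v)
      = ((Nat.card ↥(M.subgroupOf A) : ℂ) * (Nat.card ↥(Ubar.subgroupOf A) : ℂ))⁻¹ •
          ∑ a : ↥A, π a v := by
    rw [key]
    rw [← Nat.cast_smul_eq_nsmul ℂ, Nat.cast_mul, smul_smul, inv_mul_cancel₀ hc, one_smul]
  refine ⟨main, fun a => ?_⟩
  rw [main, map_smul]
  congr 1
  rw [map_sum]
  rw [← Equiv.sum_comp (Equiv.mulLeft a) (fun b => π b v)]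
  apply Fintype.sum_congr
  intro b
  simp only [map_mul, Module.End.mul_apply, Equiv.coe_mulLeft]
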